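/- Let κ be a regular cardinal, μ a (κ,κ⁺)-cardinal, and m the μ-coloring. For every limit ordinal δ with 0 < δ < κ⁺ and every ε with δ < ε < κ⁺, there exists ζ < δ such that m(ξ,ε) ≥ m(ξ,δ) for all ξ with ζ ≤ ξ < δ. -/

import Mathlib

open Set Cardinal Ordinal

noncomputable section

/-- Lower a (small) ordinal of `Ordinal.{1}` to `Ordinal.{0}` (the inverse of `Ordinal.lift`
on its range). -/
noncomputable def olower (o : Ordinal.{1}) : Ordinal.{0} :=
  sInf {a : Ordinal.{0} | Ordinal.lift.{1} a = o}

/-- The order type of a set of ordinals. -/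
noncomputable def otp (A : Set Ordinal.{0}) : Ordinal.{0} :=
  olower (Ordinal.type (Subrel ((· < ·) : Ordinal → Ordinal → Prop) (· ∈ A)))

/-- The canonical order-preserving transfer map from a set of ordinals `X` to a set of
ordinals `Y` of the same order type: an element `a ∈ X` is sent to the unique element of `Y`
occupying the same position. -/
noncomputable def omap (X Y : Set Ordinal) (a : Ordinal) : Ordinal :=
  sInf {b | b ∈ Y ∧ otp (Y ∩ Set.Iio b) = otp (X ∩ Set.Iio a)}

/-- `IsStar X₁ X₂ X` says `X = X₁ * X₂`: `X₁` and `X₂` have the same order type,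
`X = X₁ ∪ X₂`, and `X₁ ∩ X₂ < X₁ \ X₂ < X₂ \ X₁` elementwise. -/
def IsStar (X₁ X₂ X : Set Ordinal) : Prop :=
  otp X₁ = otp X₂ ∧ X = X₁ ∪ X₂ ∧
  (∀ a ∈ X₁ ∩ X₂, ∀ b ∈ X₁ \ X₂, a < b) ∧
  (∀ b ∈ X₁ \ X₂, ∀ c ∈ X₂ \ X₁, b < c)

set_option linter.deprecated false in
/-- A `(κ,κ⁺)`-cardinal (a neat simplified `(κ,1)`-morass presented as a family of sets):
a family `μ ⊆ ℘_κ(κ⁺)` which is well-founded under strict inclusion, locally small,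
homogeneous, directed, locally almost directed, covers `κ⁺` and is neat. -/
structure TwoCardinal (κ : Cardinal.{0}) where
  mu : Set (Set Ordinal)
  mem_sub : ∀ X ∈ mu, X ⊆ Set.Iio (Order.succ κ).ord
  mem_small : ∀ X ∈ mu, (otp X).card < κ
  wf : WellFounded fun X Y : mu => (X : Set Ordinal) ⊂ (Y : Set Ordinal)
  locSmall : ∀ X : mu,
    #{Z : mu // (Z : Set Ordinal) ⊂ (X : Set Ordinal)} < Cardinal.lift.{1} κ
  homog : ∀ X Y : mu, (wf.apply X).rank = (wf.apply Y).rank →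
    otp (X : Set Ordinal) = otp (Y : Set Ordinal) ∧
    {Z | Z ∈ mu ∧ Z ⊂ (Y : Set Ordinal)} =
      (fun Z => omap (X : Set Ordinal) (Y : Set Ordinal) '' Z) ''
        {Z | Z ∈ mu ∧ Z ⊂ (X : Set Ordinal)}
  directed : ∀ X ∈ mu, ∀ Y ∈ mu, ∃ Z ∈ mu, X ⊆ Z ∧ Y ⊆ Z
  locAlmostDirected : ∀ X : mu,
    (∀ Z₁ ∈ mu, ∀ Z₂ ∈ mu, Z₁ ⊂ (X : Set Ordinal) → Z₂ ⊂ (X : Set Ordinal) →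
      ∃ Z ∈ mu, Z ⊂ (X : Set Ordinal) ∧ Z₁ ⊆ Z ∧ Z₂ ⊆ Z) ∨
    (∃ X₁ X₂ : mu, (wf.apply X₁).rank = (wf.apply X₂).rank ∧
      IsStar (X₁ : Set Ordinal) (X₂ : Set Ordinal) (X : Set Ordinal) ∧
      {Z | Z ∈ mu ∧ Z ⊂ (X : Set Ordinal)} =
        {Z | Z ∈ mu ∧ Z ⊂ (X₁ : Set Ordinal)} ∪ {Z | Z ∈ mu ∧ Z ⊂ (X₂ : Set Ordinal)} ∪
          {(X₁ : Set Ordinal), (X₂ : Set Ordinal)})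
  covers : ⋃₀ mu = Set.Iio (Order.succ κ).ord
  neat : ∀ X : mu, (wf.apply X).rank ≠ 0 →
    (X : Set Ordinal) = ⋃₀ {Z | Z ∈ mu ∧ Z ⊂ (X : Set Ordinal)}

namespace TwoCardinal

variable {κ : Cardinal} (M : TwoCardinal κ)

set_option linter.deprecated false in
/-- The rank of an element of `μ` in the well-founded order `(μ, ⊂)`. -/
noncomputable def rank (X : M.mu) : Ordinal := olower ((M.wf.apply X).rank)

/-- The height of the well-founded order `(μ, ⊂)`. -/
noncomputable def ht : Ordinal := sSup (Set.range fun X : M.mu => M.rank X + 1)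

/-- The term `μ_ξ(α)` of the μ-sequence at `α`: equal to `X ∩ α` for any `X ∈ μ` of
rank `ξ` containing `α` (this is independent of the choice of `X`). -/
noncomputable def seq (α ξ : Ordinal) : Set Ordinal :=
  ⋃₀ {S | ∃ X : M.mu, M.rank X = ξ ∧ α ∈ (X : Set Ordinal) ∧
    S = (X : Set Ordinal) ∩ Set.Iio α}

/-- The μ-coloring `m(α,β) = min{rank X : α, β ∈ X ∈ μ}`. -/
noncomputable def mcol (a b : Ordinal) : Ordinal :=
  sInf {ξ | ∃ X : M.mu, M.rank X = ξ ∧ a ∈ (X : Set Ordinal) ∧ b ∈ (X : Set Ordinal)}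

end TwoCardinal

/-!
Induction on `m(δ, ε)`. Elements of `μ` of equal rank containing `ε` agree below `ε`, and one of
larger rank contains the trace of one of smaller rank; so if `m(ξ, ε) ≥ m(δ, ε)`, a witness for
`ξ, ε` contains `δ` and `m(ξ, δ) ≤ m(ξ, ε)`. Otherwise let `X` witness `m(δ, ε) > 0`. By
neatness and minimality `X = X₁ * X₂` with `δ ∈ X₁ \ X₂`, `ε ∈ X₂ \ X₁`, and every `ξ < δ` with
`m(ξ, ε) < m(δ, ε)` lies in `X₁ ∩ X₂`. If `X₁ \ X₂` has an element below `δ`, take it as `ζ`.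
Otherwise `ε' = f_{X₂X₁}(ε) ∈ X₁ \ X₂` lies above `δ` with `m(δ, ε') ≤ rank X₁ < m(δ, ε)`;
homogeneity gives `m(ξ, ε') ≤ m(ξ, ε)` on `X₁ ∩ X₂`, and the induction hypothesis at `ε'`
finishes.
-/

theorem lift_olower {o : Ordinal.{1}} (h : o ∈ range Ordinal.lift.{1, 0}) :
    Ordinal.lift.{1} (olower o) = o :=
  csInf_mem h

section OrderType

variable {A B : Set Ordinal.{0}} {a : Ordinal.{0}}

theorem lift_otp (A : Set Ordinal.{0}) [Small.{0} A] :
    Ordinal.lift.{1} (otp A) = type (Subrel ((· < ·) : Ordinal → Ordinal → Prop) (· ∈ A)) :=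
  lift_olower <| Ordinal.mem_range_lift_of_card_le.{0, 1} (a := #(Shrink.{0} A)) (by simp)

theorem lift_otp_inter_Iio [Small.{0} A] (ha : a ∈ A) :
    Ordinal.lift.{1} (otp (A ∩ Iio a)) =
      typein (Subrel ((· < ·) : Ordinal → Ordinal → Prop) (· ∈ A)) ⟨a, ha⟩ := by
  have : Small.{0} (A ∩ Iio a : Set Ordinal) := small_subset inter_subset_left
  rw [lift_otp, ← type_subrel]
  exact RelIso.ordinalType_congr
    ⟨(Equiv.subtypeSubtypeEquivSubtypeInter (· ∈ A) (· < a)).symm, Iff.rfl⟩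

theorem otp_inter_Iio_inj [Small.{0} A] {b : Ordinal} (ha : a ∈ A) (hb : b ∈ A) :
    otp (A ∩ Iio a) = otp (A ∩ Iio b) ↔ a = b := by
  rw [← Ordinal.lift_inj.{1}, lift_otp_inter_Iio ha, lift_otp_inter_Iio hb, typein_inj,
    Subtype.mk.injEq]

theorem exists_otp_inter_Iio_eq [Small.{0} A] [Small.{0} B] (h : otp A = otp B) (ha : a ∈ A) :
    ∃ b ∈ B, otp (B ∩ Iio b) = otp (A ∩ Iio a) := by
  rw [← Ordinal.lift_inj.{1}, lift_otp, lift_otp] at h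
  obtain ⟨e⟩ := Ordinal.type_eq.1 h
  refine ⟨e ⟨a, ha⟩, (e ⟨a, ha⟩).2, Ordinal.lift_inj.{1}.1 ?_⟩
  rw [lift_otp_inter_Iio, lift_otp_inter_Iio]
  exact typein_apply e.toInitialSeg _

theorem omap_spec [Small.{0} A] [Small.{0} B] (h : otp A = otp B) (ha : a ∈ A) :
    omap A B a ∈ B ∧ otp (B ∩ Iio (omap A B a)) = otp (A ∩ Iio a) :=
  csInf_mem (exists_otp_inter_Iio_eq h ha)

theorem omap_mem [Small.{0} A] [Small.{0} B] (h : otp A = otp B) (ha : a ∈ A) :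
    omap A B a ∈ B :=
  (omap_spec h ha).1

theorem omap_mapsTo [Small.{0} A] [Small.{0} B] (h : otp A = otp B) : MapsTo (omap A B) A B :=
  fun _ ↦ omap_mem h

theorem omap_injOn [Small.{0} A] [Small.{0} B] (h : otp A = otp B) : InjOn (omap A B) A := by
  intro a ha a' ha' he
  rw [← otp_inter_Iio_inj ha ha', ← (omap_spec h ha).2, ← (omap_spec h ha').2, he]

theorem omap_eq_self [Small.{0} B] (hA : a ∈ A) (hB : a ∈ B) (htr : A ∩ Iio a = B ∩ Iio a) :
    omap A B a = a := by
  have : {b | b ∈ B ∧ otp (B ∩ Iio b) = otp (A ∩ Iio a)} = {a} := by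
    ext b
    simp only [mem_ofPred_eq, mem_singleton_iff, htr]
    exact ⟨fun ⟨hb, he⟩ ↦ (otp_inter_Iio_inj hb hB).1 he, by rintro rfl; exact ⟨hB, rfl⟩⟩
  rw [omap, this, csInf_singleton]

end OrderType

theorem mem_image_iff_of_le {α : Type*} [LinearOrder α] {f : α → α} {A B S : Set α} {c : α}
    (hf : InjOn f A) (hfAB : MapsTo f A B) (hfix : ∀ x ∈ A, x ∈ B → f x = x) (hS : S ⊆ A)
    (hcA : c ∈ A) (hcB : c ∈ B) (htr : A ∩ Iio c = B ∩ Iio c) {y : α} (hy : y ≤ c) :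
    y ∈ f '' S ↔ y ∈ S := by
  have hAB : y ∈ A ↔ y ∈ B := by
    rcases hy.lt_or_eq with hy | rfl
    · simpa [hy] using congrArg (y ∈ ·) htr
    · exact iff_of_true hcA hcB
  constructor
  · rintro ⟨x, hx, rfl⟩
    have hfx : f x ∈ A := hAB.2 (hfAB (hS hx))
    rwa [← hf (hS hx) hfx (hfix _ hfx (hfAB (hS hx))).symm]
  · exact fun hyS ↦ ⟨y, hyS, hfix y (hS hyS) (hAB.1 (hS hyS))⟩

namespace TwoCardinal

variable {κ : Cardinal} {M : TwoCardinal κ}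

instance small_coe (X : M.mu) : Small.{0} (X : Set Ordinal) :=
  small_subset (M.mem_sub X.1 X.2)

variable (M) in
def wrank (X : M.mu) : Ordinal.{1} := (M.wf.apply X).rank

theorem wrank_lt_of_ssubset {X Y : M.mu} (h : (X : Set Ordinal) ⊂ Y) :
    M.wrank X < M.wrank Y :=
  Acc.rank_lt_of_rel (M.wf.apply Y) h

theorem wrank_le_of_subset {X Y : M.mu} (h : (X : Set Ordinal) ⊆ Y) :
    M.wrank X ≤ M.wrank Y := by
  rcases eq_or_ssubset_of_subset h with h | h
  · rw [Subtype.ext h]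
  · exact (wrank_lt_of_ssubset h).le

theorem eq_of_subset_of_wrank_le {X Y : M.mu} (h : (X : Set Ordinal) ⊆ Y)
    (hr : M.wrank Y ≤ M.wrank X) : (X : Set Ordinal) = Y :=
  (eq_or_ssubset_of_subset h).resolve_right fun h ↦ (wrank_lt_of_ssubset h).not_ge hr

theorem wrank_le_iff {X : M.mu} {o : Ordinal.{1}} :
    M.wrank X ≤ o ↔ ∀ Z : M.mu, (Z : Set Ordinal) ⊂ X → M.wrank Z < o := by
  rw [wrank, Acc.rank_eq, Ordinal.iSup_le_iff]
  simp only [Order.succ_le_iff, Subtype.forall]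
  rfl

theorem lt_wrank_iff {X : M.mu} {o : Ordinal.{1}} :
    o < M.wrank X ↔ ∃ Z : M.mu, (Z : Set Ordinal) ⊂ X ∧ o ≤ M.wrank Z := by
  simpa using wrank_le_iff.not

theorem wrank_mem_range_lift (X : M.mu) : M.wrank X ∈ range Ordinal.lift.{1, 0} := by
  induction X using M.wf.induction with
  | h X IH =>
  have : Small.{0} {Z : M.mu // (Z : Set Ordinal) ⊂ X} := by
    rw [Cardinal.small_iff_lift_mk_lt_univ]
    simpa using (M.locSmall X).trans (Cardinal.lift_lt_univ κ)
  choose f hf using IH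
  obtain ⟨a, ha⟩ := Ordinal.bddAbove_of_small.{0}
    (s := range fun Z : {Z : M.mu // (Z : Set Ordinal) ⊂ X} ↦ f Z.1 Z.2)
  refine Ordinal.mem_range_lift_of_le (a := Order.succ a) (wrank_le_iff.2 fun Z hZ ↦ ?_)
  rw [← hf Z hZ, Ordinal.lift_lt]
  exact Order.lt_succ_of_le (ha ⟨⟨Z, hZ⟩, rfl⟩)

theorem lift_rank (X : M.mu) : Ordinal.lift.{1} (M.rank X) = M.wrank X :=
  lift_olower (wrank_mem_range_lift X)

theorem rank_le_rank_iff {X Y : M.mu} : M.rank X ≤ M.rank Y ↔ M.wrank X ≤ M.wrank Y := by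
  rw [← Ordinal.lift_le.{1}, lift_rank, lift_rank]

theorem rank_eq_of_wrank_eq {X Y : M.mu} (h : M.wrank X = M.wrank Y) : M.rank X = M.rank Y := by
  rw [← Ordinal.lift_inj.{1}, lift_rank, lift_rank, h]

theorem rank_lt_of_ssubset {X Y : M.mu} (h : (X : Set Ordinal) ⊂ Y) : M.rank X < M.rank Y := by
  rw [← Ordinal.lift_lt.{1}, lift_rank, lift_rank]
  exact wrank_lt_of_ssubset h

theorem mcol_le_rank {a b : Ordinal} (X : M.mu) (ha : a ∈ (X : Set Ordinal))
    (hb : b ∈ (X : Set Ordinal)) : M.mcol a b ≤ M.rank X :=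
  csInf_le (OrderBot.bddBelow _) ⟨X, rfl, ha, hb⟩

variable (M) in
theorem exists_rank_eq_mcol {a b : Ordinal} (ha : a < (Order.succ κ).ord)
    (hb : b < (Order.succ κ).ord) :
    ∃ X : M.mu, M.rank X = M.mcol a b ∧ a ∈ (X : Set Ordinal) ∧ b ∈ (X : Set Ordinal) := by
  obtain ⟨Xa, hXa, haX⟩ : a ∈ ⋃₀ M.mu := M.covers ▸ ha
  obtain ⟨Xb, hXb, hbX⟩ : b ∈ ⋃₀ M.mu := M.covers ▸ hb
  obtain ⟨Z, hZ, hXaZ, hXbZ⟩ := M.directed Xa hXa Xb hXb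
  exact csInf_mem (s := {ξ | ∃ X : M.mu, M.rank X = ξ ∧ a ∈ (X : Set Ordinal) ∧
    b ∈ (X : Set Ordinal)}) ⟨_, ⟨Z, hZ⟩, rfl, hXaZ haX, hXbZ hbX⟩

section Homogeneity

variable {X₁ X₂ : M.mu}

theorem otp_eq_of_wrank_eq (h : M.wrank X₁ = M.wrank X₂) :
    otp (X₁ : Set Ordinal) = otp (X₂ : Set Ordinal) :=
  (M.homog X₁ X₂ h).1

theorem image_omap_mem (h : M.wrank X₁ = M.wrank X₂) {W : Set Ordinal} (hW : W ∈ M.mu)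
    (hWX : W ⊂ X₁) :
    omap X₁ X₂ '' W ∈ M.mu ∧ omap X₁ X₂ '' W ⊂ X₂ := by
  show omap X₁ X₂ '' W ∈ {Z | Z ∈ M.mu ∧ Z ⊂ (X₂ : Set Ordinal)}
  rw [(M.homog X₁ X₂ h).2]
  exact ⟨W, ⟨hW, hWX⟩, rfl⟩

theorem exists_image_omap_eq (h : M.wrank X₁ = M.wrank X₂) {U : Set Ordinal} (hU : U ∈ M.mu)
    (hUX : U ⊂ X₂) : ∃ W ∈ M.mu, W ⊂ X₁ ∧ omap X₁ X₂ '' W = U := by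
  have : U ∈ {Z | Z ∈ M.mu ∧ Z ⊂ (X₂ : Set Ordinal)} := ⟨hU, hUX⟩
  rw [(M.homog X₁ X₂ h).2] at this
  obtain ⟨W, ⟨hW, hWX⟩, hWU⟩ := this
  exact ⟨W, hW, hWX, hWU⟩

theorem wrank_image_omap (h : M.wrank X₁ = M.wrank X₂) (W : M.mu) :
    (W : Set Ordinal) ⊂ X₁ → ∀ W' : M.mu, (W' : Set Ordinal) = omap X₁ X₂ '' W →
      M.wrank W' = M.wrank W := by
  have hinj := omap_injOn (otp_eq_of_wrank_eq h)
  induction W using M.wf.induction with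
  | h W IH =>
  intro hWX W' hW'
  apply le_antisymm
  · refine wrank_le_iff.2 fun U hUW' ↦ ?_
    obtain ⟨W₀, hW₀, hW₀X, hW₀U⟩ := exists_image_omap_eq h U.2
      (hUW'.trans (hW' ▸ image_omap_mem h W.2 hWX).2)
    have hW₀W : W₀ ⊂ W := by
      rwa [← hinj.image_ssubset_image_iff hW₀X.subset hWX.subset, hW₀U, ← hW']
    calc M.wrank U = M.wrank ⟨W₀, hW₀⟩ := IH ⟨W₀, hW₀⟩ hW₀W hW₀X U hW₀U.symm
      _ < M.wrank W := wrank_lt_of_ssubset hW₀W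
  · refine wrank_le_iff.2 fun W₀ hW₀W ↦ ?_
    let U : M.mu := ⟨_, (image_omap_mem h W₀.2 (hW₀W.trans hWX)).1⟩
    have hUW' : (U : Set Ordinal) ⊂ W' := by
      rw [hW']
      exact (hinj.image_ssubset_image_iff (hW₀W.trans hWX).subset hWX.subset).2 hW₀W
    calc M.wrank W₀ = M.wrank U := (IH W₀ hW₀W (hW₀W.trans hWX) U rfl).symm
      _ < M.wrank W' := wrank_lt_of_ssubset hUW'

theorem exists_ssubset_image_omap_eq (h : M.wrank X₁ = M.wrank X₂) {U : M.mu}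
    (hUX : (U : Set Ordinal) ⊂ X₂) :
    ∃ W : M.mu, (W : Set Ordinal) ⊂ X₁ ∧ M.wrank W = M.wrank U ∧
      omap X₁ X₂ '' W = U := by
  obtain ⟨W, hW, hWX, hWU⟩ := exists_image_omap_eq h U.2 hUX
  exact ⟨⟨W, hW⟩, hWX, (wrank_image_omap h ⟨W, hW⟩ hWX U hWU.symm).symm, hWU⟩

theorem exists_wrank_eq_mapsTo (h : M.wrank X₁ = M.wrank X₂) {W : M.mu}
    (hWX : (W : Set Ordinal) ⊆ X₁) :
    ∃ W' : M.mu, M.wrank W' = M.wrank W ∧ MapsTo (omap X₁ X₂) W W' := by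
  rcases eq_or_ssubset_of_subset hWX with hWX | hWX
  · rw [Subtype.ext hWX]
    exact ⟨X₂, h.symm, omap_mapsTo (otp_eq_of_wrank_eq h)⟩
  · let W' : M.mu := ⟨_, (image_omap_mem h W.2 hWX).1⟩
    exact ⟨W', wrank_image_omap h W hWX W' rfl, mapsTo_image _ _⟩

end Homogeneity

variable (M) in
/-- `X = X₁ * X₂` in the second alternative of local almost directedness. -/
structure IsSplitting (X X₁ X₂ : M.mu) : Prop where
  wrank_eq : M.wrank X₁ = M.wrank X₂
  isStar : IsStar X₁ X₂ X
  left_ssubset : (X₁ : Set Ordinal) ⊂ X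
  right_ssubset : (X₂ : Set Ordinal) ⊂ X
  subset_or_subset : ∀ Z : M.mu, (Z : Set Ordinal) ⊂ X →
    (Z : Set Ordinal) ⊆ X₁ ∨ (Z : Set Ordinal) ⊆ X₂

theorem directed_or_isSplitting (X : M.mu) :
    (∀ Z₁ Z₂ : M.mu, (Z₁ : Set Ordinal) ⊂ X → (Z₂ : Set Ordinal) ⊂ X →
      ∃ Z : M.mu, (Z : Set Ordinal) ⊂ X ∧ (Z₁ : Set Ordinal) ⊆ Z ∧ (Z₂ : Set Ordinal) ⊆ Z) ∨
    ∃ X₁ X₂ : M.mu, M.IsSplitting X X₁ X₂ := by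
  rcases M.locAlmostDirected X with hdir | ⟨X₁, X₂, hr, hst, hfam⟩
  · refine Or.inl fun Z₁ Z₂ h₁ h₂ ↦ ?_
    obtain ⟨Z, hZ, hZX, h₁Z, h₂Z⟩ := hdir Z₁ Z₁.2 Z₂ Z₂.2 h₁ h₂
    exact ⟨⟨Z, hZ⟩, hZX, h₁Z, h₂Z⟩
  have hmem : ∀ {Z : Set Ordinal}, Z ∈ M.mu ∧ Z ⊂ X ↔
      (Z ∈ M.mu ∧ Z ⊂ X₁ ∨ Z ∈ M.mu ∧ Z ⊂ X₂) ∨ Z = X₁ ∨ Z = X₂ := fun {Z} ↦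
    Set.ext_iff.1 hfam Z
  refine Or.inr ⟨X₁, X₂, hr, hst, (hmem.2 (Or.inr (Or.inl rfl))).2,
    (hmem.2 (Or.inr (Or.inr rfl))).2, fun Z hZX ↦ ?_⟩
  rcases hmem.1 ⟨Z.2, hZX⟩ with (h | h) | h | h
  exacts [Or.inl h.2.subset, Or.inr h.2.subset, Or.inl h.le, Or.inr h.le]

namespace IsSplitting

variable {X X₁ X₂ : M.mu} {a : Ordinal}

theorem inter_Iio_eq (hs : M.IsSplitting X X₁ X₂) (h₁ : a ∈ (X₁ : Set Ordinal))
    (h₂ : a ∈ (X₂ : Set Ordinal)) : (X₁ : Set Ordinal) ∩ Iio a = (X₂ : Set Ordinal) ∩ Iio a := by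
  obtain ⟨-, hX, hlt₁, hlt₂⟩ := hs.isStar
  obtain ⟨d, hdX, hd₂⟩ := exists_of_ssubset hs.right_ssubset
  have hd : d ∈ (X₁ : Set Ordinal) \ X₂ :=
    ⟨((hX ▸ hdX : d ∈ (X₁ : Set Ordinal) ∪ X₂)).resolve_right hd₂, hd₂⟩
  ext x
  refine and_congr_left fun hxa ↦ ⟨fun hx₁ ↦ ?_, fun hx₂ ↦ ?_⟩
  · by_contra hx₂
    exact (hlt₁ a ⟨h₁, h₂⟩ x ⟨hx₁, hx₂⟩).not_gt hxa
  · by_contra hx₁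
    exact ((hlt₁ a ⟨h₁, h₂⟩ d hd).trans (hlt₂ d hd x ⟨hx₂, hx₁⟩)).not_gt hxa

theorem omap_eq_self (hs : M.IsSplitting X X₁ X₂) (h₁ : a ∈ (X₁ : Set Ordinal))
    (h₂ : a ∈ (X₂ : Set Ordinal)) : omap X₂ X₁ a = a :=
  _root_.omap_eq_self h₂ h₁ (hs.inter_Iio_eq h₁ h₂).symm

theorem omap_mem_diff (hs : M.IsSplitting X X₁ X₂) (ha : a ∈ (X₂ : Set Ordinal) \ X₁) :
    omap X₂ X₁ a ∈ (X₁ : Set Ordinal) \ X₂ := by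
  have hotp := otp_eq_of_wrank_eq hs.wrank_eq.symm
  have h₁ := omap_mem hotp ha.1
  refine ⟨h₁, fun h₂ ↦ ha.2 ?_⟩
  rwa [omap_injOn hotp ha.1 h₂ (hs.omap_eq_self h₁ h₂).symm]

end IsSplitting

theorem exists_mem_ssubset_le_wrank {Y : M.mu} {α : Ordinal} (hα : α ∈ (Y : Set Ordinal))
    {o : Ordinal.{1}} (ho : o < M.wrank Y) :
    ∃ Z : M.mu, α ∈ (Z : Set Ordinal) ∧ (Z : Set Ordinal) ⊂ Y ∧ o ≤ M.wrank Z := by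
  obtain ⟨W, hWY, hoW⟩ := lt_wrank_iff.1 ho
  rcases directed_or_isSplitting Y with hdir | ⟨X₁, X₂, hs⟩
  · obtain ⟨Z, ⟨hZ, hZY⟩, hαZ⟩ : α ∈ ⋃₀ {Z | Z ∈ M.mu ∧ Z ⊂ (Y : Set Ordinal)} :=
      M.neat Y (ne_bot_of_gt ho) ▸ hα
    obtain ⟨U, hUY, hZU, hWU⟩ := hdir ⟨Z, hZ⟩ W hZY hWY
    exact ⟨U, hZU hαZ, hUY, hoW.trans (wrank_le_of_subset hWU)⟩
  · have hW₁ : M.wrank W ≤ M.wrank X₁ := by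
      rcases hs.subset_or_subset W hWY with h | h
      · exact wrank_le_of_subset h
      · exact (wrank_le_of_subset h).trans_eq hs.wrank_eq.symm
    rcases (hs.isStar.2.1 ▸ hα : α ∈ (X₁ : Set Ordinal) ∪ X₂) with h | h
    · exact ⟨X₁, h, hs.left_ssubset, hoW.trans hW₁⟩
    · exact ⟨X₂, h, hs.right_ssubset, hoW.trans (hW₁.trans_eq hs.wrank_eq)⟩

theorem exists_subset_wrank_eq {X Y : M.mu} {α : Ordinal} (hαY : α ∈ (Y : Set Ordinal))
    (hr : M.wrank X ≤ M.wrank Y) :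
    ∃ Z : M.mu, (Z : Set Ordinal) ⊆ Y ∧ α ∈ (Z : Set Ordinal) ∧ M.wrank Z = M.wrank X := by
  induction Y using M.wf.induction with
  | h Y IH =>
  rcases hr.eq_or_lt with hr | hr
  · exact ⟨Y, subset_rfl, hαY, hr.symm⟩
  · obtain ⟨Y', hαY', hY'Y, hrY'⟩ := exists_mem_ssubset_le_wrank hαY hr
    obtain ⟨Z, hZY', hαZ, hrZ⟩ := IH Y' hY'Y hαY' hrY'
    exact ⟨Z, hZY'.trans hY'Y.subset, hαZ, hrZ⟩

/-- The step of `inter_Iio_eq_of_subset` across the two halves of a splitting (`hA` is the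
induction hypothesis): pull `Q` back into `A` along `omap A B`, which moves nothing below `α`. -/
theorem inter_Iio_eq_of_subset_of_subset {A B P Q : M.mu} {α : Ordinal}
    (hAB : M.wrank A = M.wrank B)
    (hcoh : ∀ c ∈ (A : Set Ordinal), c ∈ (B : Set Ordinal) →
      (A : Set Ordinal) ∩ Iio c = (B : Set Ordinal) ∩ Iio c)
    (hA : ∀ X Y : M.mu, (X : Set Ordinal) ⊆ A → (Y : Set Ordinal) ⊆ A → M.wrank X = M.wrank Y →
      α ∈ (X : Set Ordinal) → α ∈ (Y : Set Ordinal) →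
      (X : Set Ordinal) ∩ Iio α = (Y : Set Ordinal) ∩ Iio α)
    (hPA : (P : Set Ordinal) ⊆ A) (hQB : (Q : Set Ordinal) ⊆ B) (hPQ : M.wrank P = M.wrank Q)
    (hαP : α ∈ (P : Set Ordinal)) (hαQ : α ∈ (Q : Set Ordinal)) :
    (P : Set Ordinal) ∩ Iio α = (Q : Set Ordinal) ∩ Iio α := by
  have hαA := hPA hαP
  have hαB := hQB hαQ
  rcases eq_or_ssubset_of_subset hQB with hQB | hQB
  · have hPA' : (P : Set Ordinal) = A :=
      eq_of_subset_of_wrank_le hPA (by rw [hAB, hPQ, Subtype.ext hQB])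
    rw [hPA', hQB]
    exact hcoh α hαA hαB
  have hotp := otp_eq_of_wrank_eq hAB
  obtain ⟨P', hP'A, hrP', hP'Q⟩ := exists_ssubset_image_omap_eq hAB hQB
  have hmem : ∀ y ≤ α, y ∈ (Q : Set Ordinal) ↔ y ∈ (P' : Set Ordinal) := fun y hy ↦ by
    rw [← hP'Q]
    exact mem_image_iff_of_le (omap_injOn hotp) (omap_mapsTo hotp)
      (fun c h₁ h₂ ↦ omap_eq_self h₁ h₂ (hcoh c h₁ h₂)) hP'A.subset hαA hαB (hcoh α hαA hαB) hy
  rw [hA P P' hPA hP'A.subset (hPQ.trans hrP'.symm) hαP ((hmem α le_rfl).1 hαQ)]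
  ext y
  exact and_congr_left fun hy ↦ (hmem y (le_of_lt hy)).symm

theorem inter_Iio_eq_of_subset (V : M.mu) {α : Ordinal} :
    ∀ X Y : M.mu, (X : Set Ordinal) ⊆ V → (Y : Set Ordinal) ⊆ V → M.wrank X = M.wrank Y →
      α ∈ (X : Set Ordinal) → α ∈ (Y : Set Ordinal) →
      (X : Set Ordinal) ∩ Iio α = (Y : Set Ordinal) ∩ Iio α := by
  induction V using M.wf.induction with
  | h V IH =>
  intro X Y hXV hYV hr hαX hαY
  rcases eq_or_ssubset_of_subset hXV with hXV' | hXV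
  · rw [hXV', eq_of_subset_of_wrank_le hYV (by rw [← hr, Subtype.ext hXV'])]
  rcases eq_or_ssubset_of_subset hYV with hYV' | hYV
  · rw [hYV', eq_of_subset_of_wrank_le hXV.subset (by rw [hr, Subtype.ext hYV'])]
  rcases directed_or_isSplitting V with hdir | ⟨V₁, V₂, hs⟩
  · obtain ⟨W, hWV, hXW, hYW⟩ := hdir X Y hXV hYV
    exact IH W hWV X Y hXW hYW hr hαX hαY
  have hcoh : ∀ c ∈ (V₁ : Set Ordinal), c ∈ (V₂ : Set Ordinal) → _ :=
    fun c h₁ h₂ ↦ hs.inter_Iio_eq h₁ h₂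
  have IH₁ := IH V₁ hs.left_ssubset
  rcases hs.subset_or_subset X hXV with hX | hX <;> rcases hs.subset_or_subset Y hYV with hY | hY
  · exact IH₁ X Y hX hY hr hαX hαY
  · exact inter_Iio_eq_of_subset_of_subset hs.wrank_eq hcoh IH₁ hX hY hr hαX hαY
  · exact (inter_Iio_eq_of_subset_of_subset hs.wrank_eq hcoh IH₁ hY hX hr.symm hαY hαX).symm
  · exact IH V₂ hs.right_ssubset X Y hX hY hr hαX hαY

theorem inter_Iio_eq_of_wrank_eq {X Y : M.mu} (hr : M.wrank X = M.wrank Y) {α : Ordinal}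
    (hαX : α ∈ (X : Set Ordinal)) (hαY : α ∈ (Y : Set Ordinal)) :
    (X : Set Ordinal) ∩ Iio α = (Y : Set Ordinal) ∩ Iio α := by
  obtain ⟨V, hV, hXV, hYV⟩ := M.directed X X.2 Y Y.2
  exact inter_Iio_eq_of_subset ⟨V, hV⟩ X Y hXV hYV hr hαX hαY

theorem inter_Iio_subset_of_wrank_le {X Y : M.mu} (hr : M.wrank X ≤ M.wrank Y) {α : Ordinal}
    (hαX : α ∈ (X : Set Ordinal)) (hαY : α ∈ (Y : Set Ordinal)) :
    (X : Set Ordinal) ∩ Iio α ⊆ (Y : Set Ordinal) ∩ Iio α := by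
  obtain ⟨Z, hZY, hαZ, hrZ⟩ := exists_subset_wrank_eq hαY hr
  rw [← inter_Iio_eq_of_wrank_eq hrZ hαZ hαX]
  exact inter_subset_inter_left _ hZY

variable {δ ε ξ : Ordinal}

theorem mcol_le_of_mcol_le (hδε : δ < ε) (hξ : ξ < (Order.succ κ).ord)
    (hε : ε < (Order.succ κ).ord) (h : M.mcol δ ε ≤ M.mcol ξ ε) : M.mcol ξ δ ≤ M.mcol ξ ε := by
  obtain ⟨X, hX, hδX, hεX⟩ := M.exists_rank_eq_mcol (hδε.trans hε) hε
  obtain ⟨Z, hZ, hξZ, hεZ⟩ := M.exists_rank_eq_mcol hξ hε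
  have hXZ : M.wrank X ≤ M.wrank Z := rank_le_rank_iff.1 (hX ▸ hZ ▸ h)
  have hδZ := (inter_Iio_subset_of_wrank_le hXZ hεX hεZ ⟨hδX, hδε⟩).1
  exact hZ ▸ mcol_le_rank Z hξZ hδZ

theorem exists_subset_rank_eq_mcol {X : M.mu} (hε : ε ∈ (X : Set Ordinal)) (hξε : ξ < ε)
    (h : M.mcol ξ ε ≤ M.rank X) :
    ∃ W : M.mu, (W : Set Ordinal) ⊆ X ∧ ξ ∈ (W : Set Ordinal) ∧ ε ∈ (W : Set Ordinal) ∧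
      M.rank W = M.mcol ξ ε := by
  have hεκ := M.mem_sub X.1 X.2 hε
  obtain ⟨Z, hZ, hξZ, hεZ⟩ := M.exists_rank_eq_mcol (hξε.trans hεκ) hεκ
  obtain ⟨W, hWX, hεW, hWZ⟩ := exists_subset_wrank_eq hε (rank_le_rank_iff.1 (hZ ▸ h))
  have hξW : ξ ∈ (W : Set Ordinal) ∩ Iio ε := by
    rw [inter_Iio_eq_of_wrank_eq hWZ hεW hεZ]
    exact ⟨hξZ, hξε⟩
  exact ⟨W, hWX, hξW.1, hεW, (rank_eq_of_wrank_eq hWZ).trans hZ⟩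

/-- In the directed alternative, neatness would put `δ` and `ε` into a proper subset of `X`. -/
theorem exists_isSplitting_of_rank_eq_mcol {X : M.mu} (hX : M.rank X = M.mcol δ ε)
    (hδ : δ ∈ (X : Set Ordinal)) (hε : ε ∈ (X : Set Ordinal)) (hδε : δ < ε)
    (h0 : M.mcol δ ε ≠ 0) :
    ∃ X₁ X₂ : M.mu, M.IsSplitting X X₁ X₂ ∧ δ ∈ (X₁ : Set Ordinal) \ X₂ ∧
      ε ∈ (X₂ : Set Ordinal) \ X₁ := by
  have hmin : ∀ Z : M.mu, (Z : Set Ordinal) ⊂ X → δ ∈ (Z : Set Ordinal) → ε ∉ (Z : Set Ordinal) :=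
    fun Z hZX h₁ h₂ ↦ (rank_lt_of_ssubset hZX).not_ge (hX ▸ mcol_le_rank Z h₁ h₂)
  rcases directed_or_isSplitting X with hdir | ⟨X₁, X₂, hs⟩
  · have hX0 : M.wrank X ≠ 0 := by
      rwa [← lift_rank, ← Ordinal.lift_zero.{0, 1}, Ne, Ordinal.lift_inj, hX]
    have hneat := M.neat X hX0
    obtain ⟨Y₁, ⟨hY₁, hY₁X⟩, hδY₁⟩ : δ ∈ ⋃₀ {Z | Z ∈ M.mu ∧ Z ⊂ (X : Set Ordinal)} := hneat ▸ hδ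
    obtain ⟨Y₂, ⟨hY₂, hY₂X⟩, hεY₂⟩ : ε ∈ ⋃₀ {Z | Z ∈ M.mu ∧ Z ⊂ (X : Set Ordinal)} := hneat ▸ hε
    obtain ⟨U, hUX, hY₁U, hY₂U⟩ := hdir ⟨Y₁, hY₁⟩ ⟨Y₂, hY₂⟩ hY₁X hY₂X
    exact absurd (hY₂U hεY₂) (hmin U hUX (hY₁U hδY₁))
  have h₁ := hmin X₁ hs.left_ssubset
  have h₂ := hmin X₂ hs.right_ssubset
  refine ⟨X₁, X₂, hs, ?_⟩
  rcases (hs.isStar.2.1 ▸ hδ : δ ∈ (X₁ : Set Ordinal) ∪ X₂) with hδ₁ | hδ₂ <;>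
    rcases (hs.isStar.2.1 ▸ hε : ε ∈ (X₁ : Set Ordinal) ∪ X₂) with hε₁ | hε₂
  · exact absurd hε₁ (h₁ hδ₁)
  · exact ⟨⟨hδ₁, fun hδ₂ ↦ h₂ hδ₂ hε₂⟩, hε₂, h₁ hδ₁⟩
  · exact absurd (hs.isStar.2.2.2 ε ⟨hε₁, h₂ hδ₂⟩ δ ⟨hδ₂, fun hδ₁ ↦ h₁ hδ₁ hε₁⟩) hδε.not_gt
  · exact absurd hε₂ (h₂ hδ₂)

theorem IsSplitting.mcol_omap_le {X X₁ X₂ : M.mu} (hs : M.IsSplitting X X₁ X₂)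
    (hδ : δ ∈ (X₁ : Set Ordinal) \ X₂) (hε : ε ∈ (X₂ : Set Ordinal) \ X₁) (hξδ : ξ < δ)
    (hξ : M.mcol ξ ε < M.rank X) :
    ξ ∈ (X₁ : Set Ordinal) ∩ X₂ ∧ M.mcol ξ (omap X₂ X₁ ε) ≤ M.mcol ξ ε := by
  obtain ⟨W, hWX, hξW, hεW, hW⟩ := exists_subset_rank_eq_mcol (hs.right_ssubset.subset hε.1)
    (hξδ.trans (hs.isStar.2.2.2 δ hδ ε hε)) hξ.le
  have hWX' : (W : Set Ordinal) ⊂ X :=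
    ssubset_of_subset_of_ne hWX fun h ↦ hξ.ne (hW ▸ congrArg M.rank (Subtype.ext h))
  have hWX₂ : (W : Set Ordinal) ⊆ X₂ :=
    (hs.subset_or_subset W hWX').resolve_left fun h ↦ hε.2 (h hεW)
  have hξ₁₂ : ξ ∈ (X₁ : Set Ordinal) ∩ X₂ := by
    refine ⟨by_contra fun hξ₁ ↦ ?_, hWX₂ hξW⟩
    exact (hs.isStar.2.2.2 δ hδ ξ ⟨hWX₂ hξW, hξ₁⟩).not_gt hξδ
  obtain ⟨W', hW', hmaps⟩ := exists_wrank_eq_mapsTo hs.wrank_eq.symm hWX₂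
  refine ⟨hξ₁₂, ?_⟩
  calc M.mcol ξ (omap X₂ X₁ ε)
      ≤ M.rank W' := mcol_le_rank W' (hs.omap_eq_self hξ₁₂.1 hξ₁₂.2 ▸ hmaps hξW) (hmaps hεW)
    _ = M.mcol ξ ε := (rank_eq_of_wrank_eq hW').trans hW

variable (M) in
def CoherentAt (δ ε : Ordinal) : Prop :=
  ∃ ζ < δ, ∀ ξ : Ordinal, ζ ≤ ξ → ξ < δ → M.mcol ξ δ ≤ M.mcol ξ ε

theorem coherentAt_of_forall_mcol_lt (hδ : 0 < δ) (hδε : δ < ε) (hε : ε < (Order.succ κ).ord)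
    (IH : ∀ ε', δ < ε' → ε' < (Order.succ κ).ord → M.mcol δ ε' < M.mcol δ ε →
      M.CoherentAt δ ε') :
    M.CoherentAt δ ε := by
  have hle : ∀ ξ < δ, M.mcol δ ε ≤ M.mcol ξ ε → M.mcol ξ δ ≤ M.mcol ξ ε :=
    fun ξ hξ ↦ mcol_le_of_mcol_le hδε (hξ.trans (hδε.trans hε)) hε
  rcases eq_or_ne (M.mcol δ ε) 0 with h0 | h0
  · exact ⟨0, hδ, fun ξ _ hξ ↦ hle ξ hξ (h0.trans_le zero_le)⟩
  obtain ⟨X, hX, hδX, hεX⟩ := M.exists_rank_eq_mcol (hδε.trans hε) hε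
  obtain ⟨X₁, X₂, hs, hδ₁₂, hε₂₁⟩ := exists_isSplitting_of_rank_eq_mcol hX hδX hεX hδε h0
  suffices ∃ ζ < δ, ∀ ξ, ζ ≤ ξ → ξ < δ → ξ ∈ (X₁ : Set Ordinal) ∩ X₂ →
      M.mcol ξ δ ≤ M.mcol ξ (omap X₂ X₁ ε) by
    obtain ⟨ζ, hζ, hcoh⟩ := this
    refine ⟨ζ, hζ, fun ξ hζξ hξ ↦ ?_⟩
    rcases le_or_gt (M.mcol δ ε) (M.mcol ξ ε) with hge | hlt
    · exact hle ξ hξ hge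
    · obtain ⟨hξ₁₂, hmcol⟩ := hs.mcol_omap_le hδ₁₂ hε₂₁ hξ (hX ▸ hlt)
      exact (hcoh ξ hζξ hξ hξ₁₂).trans hmcol
  by_cases hη : ∃ η ∈ (X₁ : Set Ordinal) \ X₂, η < δ
  · obtain ⟨η, hη, hηδ⟩ := hη
    exact ⟨η, hηδ, fun ξ hηξ _ hξ ↦ absurd (hs.isStar.2.2.1 ξ hξ η hη) hηξ.not_gt⟩
  push Not at hη
  have hεX₁ := hs.omap_mem_diff hε₂₁
  rcases (hη _ hεX₁).eq_or_lt with heq | hlt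
  · exact ⟨0, hδ, fun ξ _ _ _ ↦ heq ▸ le_rfl⟩
  have hmcol : M.mcol δ (omap X₂ X₁ ε) < M.mcol δ ε :=
    calc M.mcol δ (omap X₂ X₁ ε) ≤ M.rank X₁ := mcol_le_rank X₁ hδ₁₂.1 hεX₁.1
      _ < M.rank X := rank_lt_of_ssubset hs.left_ssubset
      _ = M.mcol δ ε := hX
  obtain ⟨ζ, hζ, hcoh⟩ := IH _ hlt (M.mem_sub X₁.1 X₁.2 hεX₁.1) hmcol
  exact ⟨ζ, hζ, fun ξ hζξ hξ _ ↦ hcoh ξ hζξ hξ⟩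

end TwoCardinal

theorem mcol_limit_coherence_general (κ : Cardinal) (M : TwoCardinal κ)
    (δ ε : Ordinal) (hδlim : Order.IsSuccLimit δ) (hδε : δ < ε) (hε : ε < (Order.succ κ).ord) :
    ∃ ζ < δ, ∀ ξ : Ordinal, ζ ≤ ξ → ξ < δ → M.mcol ξ δ ≤ M.mcol ξ ε := by
  suffices ∀ r ε, δ < ε → ε < (Order.succ κ).ord → M.mcol δ ε = r → M.CoherentAt δ ε from
    this _ ε hδε hε rfl
  intro r
  induction r using WellFoundedLT.induction with
  | _ r IH =>
  rintro ε hδε hε rfl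
  exact M.coherentAt_of_forall_mcol_lt hδlim.bot_lt hδε hε
    fun ε' hδε' hε' hlt ↦ IH _ hlt ε' hδε' hε' rfl

/-- Coherence of the μ-coloring at limits: for limit `δ` and `δ < ε < κ⁺` there is `ζ < δ`
with `m(ξ,ε) ≥ m(ξ,δ)` for all `ζ ≤ ξ < δ`. -/
theorem mcol_limit_coherence (κ : Cardinal) (hκ : κ.IsRegular) (M : TwoCardinal κ)
    (δ ε : Ordinal) (hδlim : Order.IsSuccLimit δ) (hδε : δ < ε) (hε : ε < (Order.succ κ).ord) :
    ∃ ζ < δ, ∀ ξ : Ordinal, ζ ≤ ξ → ξ < δ → M.mcol ξ δ ≤ M.mcol ξ ε :=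
  mcol_limit_coherence_general κ M δ ε hδlim hδε hε
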